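/- arXiv:2501.02396 — 4 statements merged into one kernel-verified Lean document; each statement's English description precedes it below -/
import Mathlib

section
/- Let 𝒵 be a nonempty convex set of nonnegative random variables Z with E[Z] = 1, let 𝒵^e = {Z ∈ 𝒵 : Z > 0 a.s.} and 𝒵_φ = {Z ∈ 𝒵 : E[φ(Z)] < ∞} where φ(x) = x ln x. If Ĵ° := inf_{Z ∈ 𝒵} E[φ(Z)] is attained at some Z° ∈ 𝒵_φ and 𝒵^e ∩ 𝒵_φ ≠ ∅, then Z° > 0 a.s. (i.e. Z° ∈ 𝒵^e) and Ĵ° = inf_{Z ∈ 𝒵^e} E[φ(Z)]. -/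
/-!
Moving from a minimiser `Z°` towards a competitor `Z` along `(1 - t) Z° + t Z` changes
`E[φ]` by at most `t (E[φ(Z)] - E[φ(Z°)]) + t log t · E[Z; Z° = 0]`: off `{Z° = 0}` this is
convexity of `φ`, and on `{Z° = 0}` it is the identity `φ(t z) = t log t · z + t φ(z)`.
Since `log t → -∞` as `t → 0`, minimality forces `E[Z; Z° = 0] = 0`, so `Z° > 0` wherever
`Z > 0`.
-/

open Real MeasureTheory

/-- `φ(x) = x ln x` for `x > 0`, `φ(0) = 0`. -/
noncomputable def phi (x : ℝ) : ℝ := x * Real.log x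

open Set

@[simp]
lemma phi_zero : phi 0 = 0 := by
  simp [phi]

lemma phi_mul (x y : ℝ) : phi (x * y) = x * log x * y + x * phi y := by
  rcases eq_or_ne x 0 with rfl | hx
  · simp [phi]
  rcases eq_or_ne y 0 with rfl | hy
  · simp [phi]
  rw [phi, phi, log_mul hx hy]
  ring

section ConvexCombination

variable {x y t : ℝ}

lemma phi_convexComb_le (hx : 0 ≤ x) (hy : 0 ≤ y) (ht₀ : 0 ≤ t) (ht₁ : t ≤ 1) :
    phi ((1 - t) * x + t * y) ≤ (1 - t) * phi x + t * phi y := by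
  simpa [phi, smul_eq_mul] using
    convexOn_mul_log.2 (mem_Ici.2 hx) (mem_Ici.2 hy) (sub_nonneg.2 ht₁) ht₀ (by ring)

lemma phi_convexComb_le_add_ite (hx : 0 ≤ x) (hy : 0 ≤ y) (ht₀ : 0 ≤ t) (ht₁ : t ≤ 1) :
    phi ((1 - t) * x + t * y) ≤
      (1 - t) * phi x + t * phi y + t * log t * (if x = 0 then y else 0) := by
  split_ifs with h
  · simp only [h, mul_zero, zero_add, phi_mul, phi_zero]
    linarith
  · simpa using phi_convexComb_le hx hy ht₀ ht₁

end ConvexCombination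

lemma nonpos_of_forall_nonneg_add_mul_log {a c : ℝ}
    (h : ∀ t ∈ Ioc (0 : ℝ) 1, 0 ≤ a + c * log t) : c ≤ 0 := by
  by_contra! hc
  have ht : exp (-(|a| + 1) / c) ∈ Ioc (0 : ℝ) 1 :=
    ⟨exp_pos _,
      exp_le_one_iff.2 (div_nonpos_of_nonpos_of_nonneg (by linarith [abs_nonneg a]) hc.le)⟩
  have := h _ ht
  rw [log_exp, mul_div_cancel₀ _ hc.ne'] at this
  linarith [le_abs_self a]

section Entropy

variable {Ω : Type*} [MeasurableSpace Ω] {μ : Measure Ω} {Zo Z : Ω → ℝ} {t : ℝ}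

lemma integrable_indicator_zero_set (hZo : AEStronglyMeasurable Zo μ) (hZ : Integrable Z μ) :
    Integrable ({ω | Zo ω = 0}.indicator Z) μ :=
  hZ.integrableOn.integrable_indicator₀
    (hZo.aemeasurable.nullMeasurable (measurableSet_singleton 0))

variable [IsFiniteMeasure μ]

lemma integrable_phi_of_le {W U : Ω → ℝ} (hW : AEStronglyMeasurable W μ) (hW₀ : 0 ≤ᵐ[μ] W)
    (hU : Integrable U μ) (hle : ∀ᵐ ω ∂μ, phi (W ω) ≤ U ω) :
    Integrable (fun ω => phi (W ω)) μ :=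
  integrable_of_le_of_le (continuous_mul_log.comp_aestronglyMeasurable hW)
    (hW₀.mono fun ω h => by
      show -1 ≤ W ω * log (W ω)
      linarith [self_sub_one_le_mul_log h, show (0 : ℝ) ≤ W ω from h])
    hle (integrable_const (-1)) hU

lemma integrable_phi_convexComb (hZo : AEStronglyMeasurable Zo μ)
    (hZ : AEStronglyMeasurable Z μ) (hZo₀ : 0 ≤ᵐ[μ] Zo) (hZ₀ : 0 ≤ᵐ[μ] Z)
    (hφZo : Integrable (fun ω => phi (Zo ω)) μ) (hφZ : Integrable (fun ω => phi (Z ω)) μ)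
    (ht₀ : 0 ≤ t) (ht₁ : t ≤ 1) :
    Integrable (fun ω => phi ((1 - t) * Zo ω + t * Z ω)) μ := by
  refine integrable_phi_of_le ((hZo.const_mul _).add (hZ.const_mul _)) ?_
    ((hφZo.const_mul (1 - t)).add (hφZ.const_mul t)) ?_
  · filter_upwards [hZo₀, hZ₀] with ω h₁ h₂
    exact add_nonneg (mul_nonneg (sub_nonneg.2 ht₁) h₁) (mul_nonneg ht₀ h₂)
  · filter_upwards [hZo₀, hZ₀] with ω h₁ h₂
    exact phi_convexComb_le h₁ h₂ ht₀ ht₁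

lemma integral_phi_convexComb_le (hZo : AEStronglyMeasurable Zo μ) (hZ : Integrable Z μ)
    (hZo₀ : 0 ≤ᵐ[μ] Zo) (hZ₀ : 0 ≤ᵐ[μ] Z)
    (hφZo : Integrable (fun ω => phi (Zo ω)) μ) (hφZ : Integrable (fun ω => phi (Z ω)) μ)
    (ht₀ : 0 ≤ t) (ht₁ : t ≤ 1) :
    ∫ ω, phi ((1 - t) * Zo ω + t * Z ω) ∂μ ≤
      (1 - t) * ∫ ω, phi (Zo ω) ∂μ + t * ∫ ω, phi (Z ω) ∂μ +
        t * log t * ∫ ω, {ω | Zo ω = 0}.indicator Z ω ∂μ := by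
  have hind := integrable_indicator_zero_set hZo hZ
  calc ∫ ω, phi ((1 - t) * Zo ω + t * Z ω) ∂μ
      ≤ ∫ ω, ((1 - t) * phi (Zo ω) + t * phi (Z ω) +
          t * log t * {ω | Zo ω = 0}.indicator Z ω) ∂μ := by
        refine integral_mono_ae
          (integrable_phi_convexComb hZo hZ.aestronglyMeasurable hZo₀ hZ₀ hφZo hφZ ht₀ ht₁)
          (((hφZo.const_mul _).add (hφZ.const_mul _)).add (hind.const_mul _)) ?_
        filter_upwards [hZo₀, hZ₀] with ω h₁ h₂
        simpa [indicator_apply] using phi_convexComb_le_add_ite h₁ h₂ ht₀ ht₁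
    _ = _ := by
        rw [integral_add ((hφZo.const_mul _).fun_add (hφZ.const_mul _)) (hind.const_mul _),
          integral_add (hφZo.const_mul _) (hφZ.const_mul _), integral_const_mul,
          integral_const_mul, integral_const_mul]

theorem ae_pos_of_forall_integral_phi_le_convexComb (hZo : AEStronglyMeasurable Zo μ)
    (hZ : Integrable Z μ) (hZo₀ : 0 ≤ᵐ[μ] Zo) (hZ₀ : 0 ≤ᵐ[μ] Z)
    (hφZo : Integrable (fun ω => phi (Zo ω)) μ) (hφZ : Integrable (fun ω => phi (Z ω)) μ)
    (hmin : ∀ t ∈ Ioc (0 : ℝ) 1,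
      ∫ ω, phi (Zo ω) ∂μ ≤ ∫ ω, phi ((1 - t) * Zo ω + t * Z ω) ∂μ) :
    ∀ᵐ ω ∂μ, 0 < Z ω → 0 < Zo ω := by
  have hind := integrable_indicator_zero_set hZo hZ
  have hind₀ : 0 ≤ᵐ[μ] {ω | Zo ω = 0}.indicator Z := by
    filter_upwards [hZ₀] with ω h
    exact indicator_apply_nonneg fun _ => h
  have hc : ∫ ω, {ω | Zo ω = 0}.indicator Z ω ∂μ ≤ 0 := by
    refine nonpos_of_forall_nonneg_add_mul_log
      (a := ∫ ω, phi (Z ω) ∂μ - ∫ ω, phi (Zo ω) ∂μ) fun t ht => ?_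
    have hle := (hmin t ht).trans
      (integral_phi_convexComb_le hZo hZ hZo₀ hZ₀ hφZo hφZ ht.1.le ht.2)
    refine (mul_nonneg_iff_of_pos_left ht.1).1 ?_
    linarith
  have hzero : {ω | Zo ω = 0}.indicator Z =ᵐ[μ] 0 :=
    (integral_eq_zero_iff_of_nonneg_ae hind₀ hind).1 (hc.antisymm (integral_nonneg_of_ae hind₀))
  filter_upwards [hzero, hZo₀] with ω h₀ hZoω hZω
  refine hZoω.lt_of_ne' fun hω => hZω.ne' ?_
  simpa [hω] using h₀

end Entropy

theorem minimizer_equivalent_general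
    {Ω : Type*} [MeasurableSpace Ω] (μ : Measure Ω) [IsProbabilityMeasure μ]
    (Zs : Set (Ω → ℝ)) (hconv : Convex ℝ Zs)
    (hdens : ∀ Z ∈ Zs, (∀ᵐ ω ∂μ, 0 ≤ Z ω) ∧ Integrable Z μ ∧ ∫ ω, Z ω ∂μ = 1)
    (Zo : Ω → ℝ) (hZo : Zo ∈ Zs)
    (hZophi : Integrable (fun ω => phi (Zo ω)) μ)
    (hmin : ∀ Z ∈ Zs, Integrable (fun ω => phi (Z ω)) μ →
      ∫ ω, phi (Zo ω) ∂μ ≤ ∫ ω, phi (Z ω) ∂μ)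
    (hZe : ∃ Z ∈ Zs, (∀ᵐ ω ∂μ, 0 < Z ω) ∧ Integrable (fun ω => phi (Z ω)) μ) :
    (∀ᵐ ω ∂μ, 0 < Zo ω) ∧
    (∀ Z ∈ Zs, (∀ᵐ ω ∂μ, 0 < Z ω) → Integrable (fun ω => phi (Z ω)) μ →
      ∫ ω, phi (Zo ω) ∂μ ≤ ∫ ω, phi (Z ω) ∂μ) := by
  obtain ⟨Z, hZ, hZpos, hZphi⟩ := hZe
  obtain ⟨hZo₀, hZoint, -⟩ := hdens Zo hZo
  obtain ⟨hZ₀, hZint, -⟩ := hdens Z hZ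
  have hvar : ∀ t ∈ Ioc (0 : ℝ) 1,
      ∫ ω, phi (Zo ω) ∂μ ≤ ∫ ω, phi ((1 - t) * Zo ω + t * Z ω) ∂μ := fun t ht =>
    hmin _ (hconv hZo hZ (sub_nonneg.2 ht.2) ht.1.le (by ring))
      (integrable_phi_convexComb hZoint.aestronglyMeasurable hZint.aestronglyMeasurable
        hZo₀ hZ₀ hZophi hZphi ht.1.le ht.2)
  refine ⟨?_, fun Z hZ _ hZphi => hmin Z hZ hZphi⟩
  filter_upwards [ae_pos_of_forall_integral_phi_le_convexComb hZoint.aestronglyMeasurable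
    hZint hZo₀ hZ₀ hZophi hZphi hvar, hZpos] with ω h hpos using h hpos

/-- If the infimum of `E[φ(Z)]` over a convex set `𝒵` of densities is attained at
`Z° ∈ 𝒵_φ` and `𝒵^e ∩ 𝒵_φ ≠ ∅`, then `Z° > 0` a.s. (`Z° ∈ 𝒵^e`), and hence the
infimum over `𝒵` coincides with the infimum over `𝒵^e` and is attained at `Z°`. -/
theorem minimizer_equivalent
    {Ω : Type*} [MeasurableSpace Ω] (μ : Measure Ω) [IsProbabilityMeasure μ]
    (Zs : Set (Ω → ℝ)) (hconv : Convex ℝ Zs) (hne : Zs.Nonempty)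
    (hdens : ∀ Z ∈ Zs, (∀ᵐ ω ∂μ, 0 ≤ Z ω) ∧ Integrable Z μ ∧ ∫ ω, Z ω ∂μ = 1)
    (Zo : Ω → ℝ) (hZo : Zo ∈ Zs)
    (hZophi : Integrable (fun ω => phi (Zo ω)) μ)
    (hmin : ∀ Z ∈ Zs, Integrable (fun ω => phi (Z ω)) μ →
      ∫ ω, phi (Zo ω) ∂μ ≤ ∫ ω, phi (Z ω) ∂μ)
    (hZe : ∃ Z ∈ Zs, (∀ᵐ ω ∂μ, 0 < Z ω) ∧ Integrable (fun ω => phi (Z ω)) μ) :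
    (∀ᵐ ω ∂μ, 0 < Zo ω) ∧
    (∀ Z ∈ Zs, (∀ᵐ ω ∂μ, 0 < Z ω) → Integrable (fun ω => phi (Z ω)) μ →
      ∫ ω, phi (Zo ω) ∂μ ≤ ∫ ω, phi (Z ω) ∂μ) :=
  minimizer_equivalent_general μ Zs hconv hdens Zo hZo hZophi hmin hZe
end

section
/- (Sufficiency part of the entropy-minimality criterion.) Let 𝒵 be a convex set of densities, 𝒵_φ = {Z ∈ 𝒵 : E[Z ln Z] < ∞}, and let Z° ∈ 𝒵_φ with Z° > 0 a.s. Set J = E[Z° ln Z°]. If there exists a random variable η with E[|η| Z] < ∞ and E[η Z] ≤ 0 for all Z ∈ 𝒵_φ, E[η Z°] = 0, and Z° = e^{J - η}, then E[Z ln Z] ≥ J for all Z ∈ 𝒵_φ, i.e. Z° is the entropy minimizer. -/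
open Real MeasureTheory

lemma key_ineq {x y : ℝ} (hx : 0 ≤ x) (hy : 0 < y) :
    y * Real.log y + (1 + Real.log y) * (x - y) ≤ x * Real.log x := by
  rcases hx.eq_or_lt with h | h
  · rw [← h]
    nlinarith [hy]
  · have hlog := Real.log_le_sub_one_of_pos (div_pos hy h)
    rw [Real.log_div hy.ne' h.ne'] at hlog
    have h2 : x * (Real.log y - Real.log x) ≤ x * (y / x - 1) :=
      mul_le_mul_of_nonneg_left hlog h.le
    have h3 : x * (y / x - 1) = y - x := by field_simp
    nlinarith [h2, h3]

/-- Sufficiency part of the entropy-minimality criterion: if `Z° ∈ 𝒵_φ ∩ 𝒵^e`,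
`J = E[Z° ln Z°]`, and there is `η` with `E[|η| Z] < ∞` and `E[η Z] ≤ 0` for all
`Z ∈ 𝒵_φ`, `E[η Z°] = 0`, and `Z° = e^{J - η}`, then `E[Z ln Z] ≥ J` for all `Z ∈ 𝒵_φ`. -/
theorem entropy_criterion_sufficient
    {Ω : Type*} [MeasurableSpace Ω] (μ : Measure Ω) [IsProbabilityMeasure μ]
    (Zs : Set (Ω → ℝ)) (hconv : Convex ℝ Zs)
    (hdens : ∀ Z ∈ Zs, (∀ᵐ ω ∂μ, 0 ≤ Z ω) ∧ Integrable Z μ ∧ ∫ ω, Z ω ∂μ = 1)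
    (Zo : Ω → ℝ) (hZo : Zo ∈ Zs) (hZopos : ∀ᵐ ω ∂μ, 0 < Zo ω)
    (hZophi : Integrable (fun ω => phi (Zo ω)) μ)
    (J : ℝ) (hJ : J = ∫ ω, phi (Zo ω) ∂μ)
    (η : Ω → ℝ)
    (hηint : ∀ Z ∈ Zs, Integrable (fun ω => phi (Z ω)) μ →
      Integrable (fun ω => |η ω| * Z ω) μ)
    (hηneg : ∀ Z ∈ Zs, Integrable (fun ω => phi (Z ω)) μ →
      ∫ ω, η ω * Z ω ∂μ ≤ 0)
    (hηZo : ∫ ω, η ω * Zo ω ∂μ = 0)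
    (hform : ∀ᵐ ω ∂μ, Zo ω = Real.exp (J - η ω)) :
    ∀ Z ∈ Zs, Integrable (fun ω => phi (Z ω)) μ →
      J ≤ ∫ ω, phi (Z ω) ∂μ := by
  intro Z hZ hZphi
  obtain ⟨hZnn, hZint, hZone⟩ := hdens Z hZ
  obtain ⟨hZonn, hZoint, hZoone⟩ := hdens Zo hZo
  have hηae : η =ᵐ[μ] fun ω => J - Real.log (Zo ω) := by
    filter_upwards [hform] with ω h
    rw [h, Real.log_exp]; ring
  have hηmeas : AEMeasurable η μ := by
    have h1 : AEMeasurable (fun ω => J - Real.log (Zo ω)) μ :=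
      aemeasurable_const.sub (Real.measurable_log.comp_aemeasurable hZoint.aemeasurable)
    exact h1.congr hηae.symm
  have hint_ηZ : Integrable (fun ω => η ω * Z ω) μ :=
    (hηint Z hZ hZphi).mono' (hηmeas.mul hZint.aemeasurable).aestronglyMeasurable
      (by filter_upwards [hZnn] with ω h
          rw [Real.norm_eq_abs, abs_mul, abs_of_nonneg h])
  have hint_ηZo : Integrable (fun ω => η ω * Zo ω) μ :=
    (hηint Zo hZo hZophi).mono' (hηmeas.mul hZoint.aemeasurable).aestronglyMeasurable
      (by filter_upwards [hZonn] with ω h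
          rw [Real.norm_eq_abs, abs_mul, abs_of_nonneg h])
  set h : Ω → ℝ := fun ω =>
    phi (Zo ω) + (1 + J) * (Z ω - Zo ω) - η ω * Z ω + η ω * Zo ω with hh
  have hint_h : Integrable h μ :=
    ((hZophi.add ((hZint.sub hZoint).const_mul (1 + J))).sub hint_ηZ).add hint_ηZo
  have hle : ∀ᵐ ω ∂μ, h ω ≤ phi (Z ω) := by
    filter_upwards [hZnn, hZopos, hform] with ω h0 h1 h2
    have hlog : Real.log (Zo ω) = J - η ω := by rw [h2, Real.log_exp]
    have k := key_ineq h0 h1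
    rw [hlog] at k
    simp only [hh, phi]
    nlinarith [k]
  have hmono : ∫ ω, h ω ∂μ ≤ ∫ ω, phi (Z ω) ∂μ :=
    integral_mono_ae hint_h hZphi hle
  have e1 : ∫ ω, h ω ∂μ
      = (∫ ω, phi (Zo ω) ∂μ) + (1 + J) * ((∫ ω, Z ω ∂μ) - ∫ ω, Zo ω ∂μ)
        - (∫ ω, η ω * Z ω ∂μ) + ∫ ω, η ω * Zo ω ∂μ := by
    have i1 : Integrable (fun ω => (1 + J) * (Z ω - Zo ω)) μ :=
      (hZint.sub hZoint).const_mul (1 + J)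
    have i2 : Integrable (fun ω => phi (Zo ω) + (1 + J) * (Z ω - Zo ω)) μ := hZophi.add i1
    have i3 : Integrable (fun ω => phi (Zo ω) + (1 + J) * (Z ω - Zo ω) - η ω * Z ω) μ :=
      i2.sub hint_ηZ
    simp only [hh]
    rw [integral_add i3 hint_ηZo, integral_sub i2 hint_ηZ, integral_add hZophi i1,
      integral_const_mul, integral_sub hZint hZoint]
  have hneg := hηneg Z hZ hZphi
  rw [e1, hZone, hZoone, hηZo, ← hJ] at hmono
  linarith
end

section
/- (Necessity part of the entropy-minimality criterion.) Let Z° ∈ 𝒵_φ with Z° > 0 a.s. attain J° = inf_{Z ∈ 𝒵_φ} E[Z ln Z]. Then η := J° - ln Z° satisfies E[η Z°] = 0, Z° = e^{J° - η}, and E[η Z] ≤ 0 for all Z ∈ 𝒵_φ. -/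
/-!
Write `J° = E[φ(Z°)]` and `η = J° - ln Z°`. Pointwise,
`η Z = (J° Z - φ(Z°)) + (Z - Z°) - (ln Z° + 1)(Z - Z°)`, so for densities `E[η Z]` is minus the
first variation `E[(ln Z° + 1)(Z - Z°)]` of the entropy at `Z°` in the direction of `Z`; with
`Z = Z°` this gives `E[η Z°] = 0`. The first variation is the right derivative at `0` of
`t ↦ E[φ(Z° + t(Z - Z°))]`, which is nonnegative because `Z°` minimises the entropy on the
segment `[Z°, Z] ⊆ 𝒵`. By convexity of `φ` the difference quotients decrease as `t ↓ 0`, so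
monotone convergence takes the limit inside the expectation; since their expectations stay
nonnegative, it also shows that `(ln Z° + 1)(Z - Z°)` is integrable.
-/

open Real MeasureTheory Filter Topology Set

lemma ConvexOn.secant_segment_mono {E : Type*} [AddCommGroup E] [Module ℝ E] {f : E → ℝ}
    {s : Set E} (hf : ConvexOn ℝ s f) {a b : E} (ha : a ∈ s) (hb : b ∈ s) {u v : ℝ}
    (hu : 0 < u) (huv : u ≤ v) (hv : v ≤ 1) :
    (f (a + u • (b - a)) - f a) / u ≤ (f (a + v • (b - a)) - f a) / v := by
  have hmem : ∀ t ∈ Icc (0 : ℝ) 1, t ∈ AffineMap.lineMap a b ⁻¹' s :=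
    fun t ht => hf.1.lineMap_mem ha hb ht
  have := (hf.comp_affineMap (AffineMap.lineMap a b)).secant_mono
    (hmem 0 ⟨le_rfl, zero_le_one⟩) (hmem u ⟨hu.le, huv.trans hv⟩)
    (hmem v ⟨hu.le.trans huv, hv⟩) hu.ne' (hu.trans_le huv).ne' huv
  simpa [AffineMap.lineMap_apply_module', add_comm] using this

lemma ConvexOn.antitone_secant_segment {E : Type*} [AddCommGroup E] [Module ℝ E] {f : E → ℝ}
    {s : Set E} (hf : ConvexOn ℝ s f) {a b : E} (ha : a ∈ s) (hb : b ∈ s) {t : ℕ → ℝ}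
    (ht_pos : ∀ n, 0 < t n) (ht_le : ∀ n, t n ≤ 1) (ht_anti : Antitone t) :
    Antitone fun n => (f (a + t n • (b - a)) - f a) / t n :=
  fun _ m hnm => hf.secant_segment_mono ha hb (ht_pos m) (ht_anti hnm) (ht_le _)

lemma HasDerivAt.tendsto_secant_line {f : ℝ → ℝ} {f' a : ℝ} (hf : HasDerivAt f f' a) (d : ℝ) :
    Tendsto (fun t => (f (a + t * d) - f a) / t) (𝓝[>] 0) (𝓝 (f' * d)) := by
  have hdir : HasDerivAt (fun u => a + u * d) d 0 := by
    simpa using ((hasDerivAt_id (0 : ℝ)).mul_const d).const_add a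
  refine (HasDerivAt.comp_of_eq 0 hf hdir (by simp)).tendsto_slope_zero_right.congr fun t => ?_
  simp [div_eq_inv_mul]

theorem integrable_of_antitone_of_tendsto_of_le_integral {α : Type*} [MeasurableSpace α]
    {μ : Measure α} {f : ℕ → α → ℝ} {F : α → ℝ} {c : ℝ} (hf : ∀ n, Integrable (f n) μ)
    (h_mono : ∀ᵐ x ∂μ, Antitone fun n => f n x)
    (h_tendsto : ∀ᵐ x ∂μ, Tendsto (fun n => f n x) atTop (𝓝 (F x)))
    (h_bdd : ∀ n, c ≤ ∫ x, f n x ∂μ) :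
    Integrable F μ := by
  have hF_meas : AEStronglyMeasurable F μ :=
    aestronglyMeasurable_of_tendsto_ae _ (fun n => (hf n).1) h_tendsto
  have hF_le : ∀ᵐ x ∂μ, F x ≤ f 0 x := by
    filter_upwards [h_mono, h_tendsto] with x hx_mono hx_tendsto
    exact le_of_tendsto' hx_tendsto fun n => hx_mono (Nat.zero_le n)
  suffices hgap : Integrable (fun x => f 0 x - F x) μ by
    exact ((hf 0).sub hgap).congr (.of_forall fun x => by simp)
  refine (lintegral_ofReal_ne_top_iff_integrable (f := fun x => f 0 x - F x)
    ((hf 0).1.sub hF_meas) (by filter_upwards [hF_le] with x hx using sub_nonneg.2 hx)).1 ?_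
  have hlim : Tendsto (fun n => ∫⁻ x, ENNReal.ofReal (f 0 x - f n x) ∂μ) atTop
      (𝓝 (∫⁻ x, ENNReal.ofReal (f 0 x - F x) ∂μ)) := by
    refine lintegral_tendsto_of_tendsto_of_monotone
      (fun n => ((hf 0).sub (hf n)).aemeasurable.ennreal_ofReal) ?_ ?_
    · filter_upwards [h_mono] with x hx n m hnm
      exact ENNReal.ofReal_le_ofReal (sub_le_sub_left (hx hnm) _)
    · filter_upwards [h_tendsto] with x hx
      exact (ENNReal.continuous_ofReal.tendsto _).comp (tendsto_const_nhds.sub hx)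
  have hbound : ∀ n, ∫⁻ x, ENNReal.ofReal (f 0 x - f n x) ∂μ
      ≤ ENNReal.ofReal (∫ x, f 0 x ∂μ - c) := by
    intro n
    rw [← ofReal_integral_eq_lintegral_ofReal (f := fun x => f 0 x - f n x) ((hf 0).sub (hf n))
      (by filter_upwards [h_mono] with x hx using sub_nonneg.2 (hx (Nat.zero_le n))),
      integral_sub (hf 0) (hf n)]
    exact ENNReal.ofReal_le_ofReal (by linarith [h_bdd n])
  exact ne_top_of_le_ne_top ENNReal.ofReal_ne_top (le_of_tendsto' hlim hbound)

lemma phi_segment_le {a b t : ℝ} (ha : 0 ≤ a) (hb : 0 ≤ b) (ht0 : 0 ≤ t) (ht1 : t ≤ 1) :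
    phi (a + t * (b - a)) ≤ (1 - t) * phi a + t * phi b := by
  have := convexOn_mul_log.2 (mem_Ici.2 ha) (mem_Ici.2 hb) (sub_nonneg.2 ht1) ht0
    (by ring)
  simpa [phi, show (1 - t) * a + t * b = a + t * (b - a) by ring] using this

section Entropy

variable {Ω : Type*} [MeasurableSpace Ω] {μ : Measure Ω} {Z₀ Z : Ω → ℝ}

lemma integrable_phi_segment [IsFiniteMeasure μ] (hZ₀ : Integrable Z₀ μ) (hZ : Integrable Z μ)
    (hZ₀_nn : ∀ᵐ ω ∂μ, 0 ≤ Z₀ ω) (hZ_nn : ∀ᵐ ω ∂μ, 0 ≤ Z ω)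
    (hφZ₀ : Integrable (fun ω => phi (Z₀ ω)) μ) (hφZ : Integrable (fun ω => phi (Z ω)) μ)
    {t : ℝ} (ht0 : 0 ≤ t) (ht1 : t ≤ 1) :
    Integrable (fun ω => phi (Z₀ ω + t * (Z ω - Z₀ ω))) μ := by
  have hZt : Integrable (fun ω => Z₀ ω + t * (Z ω - Z₀ ω)) μ :=
    hZ₀.add ((hZ.sub hZ₀).const_mul t)
  refine integrable_of_le_of_le
    (continuous_mul_log.comp_aestronglyMeasurable hZt.1) ?_ ?_
    (hZt.sub (integrable_const 1)) ((hφZ₀.const_mul (1 - t)).add (hφZ.const_mul t))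
  · filter_upwards [hZ₀_nn, hZ_nn] with ω h₀ h
    exact self_sub_one_le_mul_log (by nlinarith)
  · filter_upwards [hZ₀_nn, hZ_nn] with ω h₀ h
    exact phi_segment_le h₀ h ht0 ht1

theorem entropy_first_variation_nonneg [IsFiniteMeasure μ] (hZ₀ : Integrable Z₀ μ)
    (hZ : Integrable Z μ) (hZ₀_pos : ∀ᵐ ω ∂μ, 0 < Z₀ ω) (hZ_nn : ∀ᵐ ω ∂μ, 0 ≤ Z ω)
    (hφZ₀ : Integrable (fun ω => phi (Z₀ ω)) μ) (hφZ : Integrable (fun ω => phi (Z ω)) μ)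
    (hmin : ∀ t ∈ Ioc (0 : ℝ) 1,
      Integrable (fun ω => phi (Z₀ ω + t * (Z ω - Z₀ ω))) μ →
      ∫ ω, phi (Z₀ ω) ∂μ ≤ ∫ ω, phi (Z₀ ω + t * (Z ω - Z₀ ω)) ∂μ) :
    Integrable (fun ω => (log (Z₀ ω) + 1) * (Z ω - Z₀ ω)) μ ∧
      0 ≤ ∫ ω, (log (Z₀ ω) + 1) * (Z ω - Z₀ ω) ∂μ := by
  set t : ℕ → ℝ := fun n => 1 / ((n : ℝ) + 1)
  have ht_pos : ∀ n, 0 < t n := fun n => by positivity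
  have ht_le : ∀ n, t n ≤ 1 := fun n => div_le_one_of_le₀ (by simp) (by positivity)
  have ht_anti : Antitone t := fun n m hnm => one_div_le_one_div_of_le (by positivity)
    (by simpa using hnm)
  have ht_lim : Tendsto t atTop (𝓝[>] 0) :=
    tendsto_nhdsWithin_iff.2 ⟨tendsto_one_div_add_atTop_nhds_zero_nat, .of_forall ht_pos⟩
  set g : ℕ → Ω → ℝ := fun n ω => (phi (Z₀ ω + t n * (Z ω - Z₀ ω)) - phi (Z₀ ω)) / t n
  have hseg : ∀ n, Integrable (fun ω => phi (Z₀ ω + t n * (Z ω - Z₀ ω))) μ := fun n =>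
    integrable_phi_segment hZ₀ hZ (by filter_upwards [hZ₀_pos] with ω h using h.le) hZ_nn
      hφZ₀ hφZ (ht_pos n).le (ht_le n)
  have hg_int : ∀ n, Integrable (g n) μ := fun n => ((hseg n).sub hφZ₀).div_const _
  have hg_nonneg : ∀ n, 0 ≤ ∫ ω, g n ω ∂μ := fun n => by
    rw [integral_div, integral_sub (hseg n) hφZ₀]
    exact div_nonneg (sub_nonneg.2 (hmin _ ⟨ht_pos n, ht_le n⟩ (hseg n))) (ht_pos n).le
  have hg_anti : ∀ᵐ ω ∂μ, Antitone fun n => g n ω := by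
    filter_upwards [hZ₀_pos, hZ_nn] with ω h₀ h
    exact convexOn_mul_log.antitone_secant_segment (mem_Ici.2 h₀.le)
      (mem_Ici.2 h) ht_pos ht_le ht_anti
  have hg_lim : ∀ᵐ ω ∂μ, Tendsto (fun n => g n ω) atTop
      (𝓝 ((log (Z₀ ω) + 1) * (Z ω - Z₀ ω))) := by
    filter_upwards [hZ₀_pos] with ω h₀
    exact ((hasDerivAt_mul_log h₀.ne').tendsto_secant_line _).comp ht_lim
  have hint := integrable_of_antitone_of_tendsto_of_le_integral hg_int hg_anti hg_lim hg_nonneg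
  exact ⟨hint, ge_of_tendsto'
    (integral_tendsto_of_tendsto_of_antitone hg_int hint hg_anti hg_lim) hg_nonneg⟩

theorem integral_sub_log_mul_eq_neg (hZ₀ : Integrable Z₀ μ) (hZ : Integrable Z μ)
    (hZ₀_one : ∫ ω, Z₀ ω ∂μ = 1) (hZ_one : ∫ ω, Z ω ∂μ = 1)
    (hφZ₀ : Integrable (fun ω => phi (Z₀ ω)) μ)
    (hvar : Integrable (fun ω => (log (Z₀ ω) + 1) * (Z ω - Z₀ ω)) μ) :
    Integrable (fun ω => (∫ ω, phi (Z₀ ω) ∂μ - log (Z₀ ω)) * Z ω) μ ∧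
      ∫ ω, (∫ ω, phi (Z₀ ω) ∂μ - log (Z₀ ω)) * Z ω ∂μ =
        -∫ ω, (log (Z₀ ω) + 1) * (Z ω - Z₀ ω) ∂μ := by
  set J := ∫ ω, phi (Z₀ ω) ∂μ
  have hsplit : (fun ω => (J - log (Z₀ ω)) * Z ω) = fun ω =>
      (J * Z ω - phi (Z₀ ω)) + (Z ω - Z₀ ω) - (log (Z₀ ω) + 1) * (Z ω - Z₀ ω) := by
    funext ω; simp only [phi]; ring
  have h₁ : Integrable (fun ω => J * Z ω - phi (Z₀ ω)) μ := (hZ.const_mul J).sub hφZ₀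
  have h₂ : Integrable (fun ω => Z ω - Z₀ ω) μ := hZ.sub hZ₀
  have h₁₂ : Integrable (fun ω => (J * Z ω - phi (Z₀ ω)) + (Z ω - Z₀ ω)) μ := h₁.add h₂
  rw [hsplit]
  refine ⟨h₁₂.sub hvar, ?_⟩
  rw [integral_sub h₁₂ hvar, integral_add h₁ h₂, integral_sub (hZ.const_mul J) hφZ₀,
    integral_sub hZ hZ₀, integral_const_mul, hZ_one, hZ₀_one]
  ring

end Entropy

/-- Necessity part of the entropy-minimality criterion: if `Z° ∈ 𝒵_φ ∩ 𝒵^e` attains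
`J° = inf_{Z ∈ 𝒵_φ} E[Z ln Z]`, then `η := J° - ln Z°` satisfies `E[η Z°] = 0`,
`Z° = e^{J° - η}`, and `E[η Z] ≤ 0` for all `Z ∈ 𝒵_φ`. -/
theorem entropy_criterion_necessary
    {Ω : Type*} [MeasurableSpace Ω] (μ : Measure Ω) [IsProbabilityMeasure μ]
    (Zs : Set (Ω → ℝ)) (hconv : Convex ℝ Zs)
    (hdens : ∀ Z ∈ Zs, (∀ᵐ ω ∂μ, 0 ≤ Z ω) ∧ Integrable Z μ ∧ ∫ ω, Z ω ∂μ = 1)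
    (Zo : Ω → ℝ) (hZo : Zo ∈ Zs) (hZopos : ∀ᵐ ω ∂μ, 0 < Zo ω)
    (hZophi : Integrable (fun ω => phi (Zo ω)) μ)
    (Jo : ℝ) (hJo : Jo = ∫ ω, phi (Zo ω) ∂μ)
    (hmin : ∀ Z ∈ Zs, Integrable (fun ω => phi (Z ω)) μ →
      Jo ≤ ∫ ω, phi (Z ω) ∂μ) :
    (Integrable (fun ω => (Jo - Real.log (Zo ω)) * Zo ω) μ ∧
      ∫ ω, (Jo - Real.log (Zo ω)) * Zo ω ∂μ = 0) ∧
    (∀ᵐ ω ∂μ, Zo ω = Real.exp (Jo - (Jo - Real.log (Zo ω)))) ∧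
    (∀ Z ∈ Zs, Integrable (fun ω => phi (Z ω)) μ →
      Integrable (fun ω => (Jo - Real.log (Zo ω)) * Z ω) μ ∧
      ∫ ω, (Jo - Real.log (Zo ω)) * Z ω ∂μ ≤ 0) := by
  subst hJo
  obtain ⟨-, hZo_int, hZo_one⟩ := hdens Zo hZo
  obtain ⟨hηZo_int, hηZo⟩ := integral_sub_log_mul_eq_neg hZo_int hZo_int hZo_one hZo_one hZophi
    (by simp)
  refine ⟨⟨hηZo_int, by simpa using hηZo⟩, ?_, fun Z hZ hZphi => ?_⟩
  · filter_upwards [hZopos] with ω hω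
    rw [sub_sub_cancel, exp_log hω]
  obtain ⟨hZ_nn, hZ_int, hZ_one⟩ := hdens Z hZ
  obtain ⟨hvar_int, hvar_nonneg⟩ := entropy_first_variation_nonneg hZo_int hZ_int hZopos hZ_nn
    hZophi hZphi fun t ht => hmin _ (hconv.add_smul_sub_mem hZo hZ ⟨ht.1.le, ht.2⟩)
  obtain ⟨hηZ_int, hηZ⟩ := integral_sub_log_mul_eq_neg hZo_int hZ_int hZo_one hZ_one hZophi hvar_int
  exact ⟨hηZ_int, hηZ ▸ neg_nonpos.2 hvar_nonneg⟩
end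

section
/- If 𝒵 is a convex set of nonnegative random variables with E[Z] = 1 that is closed in probability (L⁰), and Ĵ° := inf_{Z ∈ 𝒵} E[Z ln Z] < ∞, then the infimum is attained: there exists Z° ∈ 𝒵 with E[Z° ln Z°] = Ĵ°. -/
/-!
Take a minimizing sequence `Zₙ`. Pointwise, `(√a - √b)² / 2 ≤ φ a + φ b - 2 φ ((a + b) / 2)`,
and the midpoint of `Zₙ` and `Zₘ` lies in `𝒵`, so its entropy is at least the infimum `J`;
hence `E[(√Zₙ - √Zₘ)²]` is bounded by the excesses of `Zₙ` and `Zₘ` over `J`, and `√Zₙ` is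
Cauchy in `L²`. A subsequence of `Zₙ` then converges a.s. to some `Z°`, which lies in `𝒵` since
`𝒵` is closed in probability, and Fatou's lemma (applicable as `φ ≥ -1/e`) gives
`E[φ(Z°)] ≤ J`. This uniform convexity of `φ` in the Hellinger distance replaces the
Komlós-type subsequence argument.
-/

open Real MeasureTheory

open Filter Topology

lemma exists_seq_antitone_tendsto_sInf_image {α : Type*} {s : Set α} {F : α → ℝ}
    (hs : s.Nonempty) (hF : BddBelow (F '' s)) :
    ∃ x : ℕ → α, (∀ n, x n ∈ s) ∧ Antitone (F ∘ x) ∧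
      Tendsto (F ∘ x) atTop (𝓝 (sInf (F '' s))) := by
  obtain ⟨u, hu_anti, hu, hu_mem⟩ := exists_seq_tendsto_sInf (hs.image F) hF
  choose x hx hFx using hu_mem
  obtain rfl : F ∘ x = u := funext hFx
  exact ⟨x, hx, hu_anti, hu⟩

lemma neg_exp_neg_one_le_phi {x : ℝ} (hx : 0 ≤ x) : -exp (-1) ≤ phi x := by
  rcases hx.eq_or_lt with rfl | hx
  · simp [phi]; positivity
  · have := mul_exp_neg_le_exp_neg_one (-log x)
    rw [neg_neg, exp_log hx] at this
    unfold phi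
    linarith

lemma two_mul_sub_sqrt_mul_sqrt_le {a m : ℝ} (ha : 0 ≤ a) (hm : 0 < m) :
    2 * (a - √a * √m) ≤ a * log a - a * log m := by
  rcases ha.eq_or_lt with rfl | ha
  · simp
  · have hsa : 0 < √a := sqrt_pos.2 ha
    have hsm : 0 < √m := sqrt_pos.2 hm
    have hlog := one_sub_inv_le_log_of_pos (div_pos hsa hsm)
    rw [log_div hsa.ne' hsm.ne', log_sqrt ha.le, log_sqrt hm.le, inv_div] at hlog
    have h := mul_le_mul_of_nonneg_left hlog (by positivity : 0 ≤ 2 * a)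
    have hsq : √a * √a = a := mul_self_sqrt ha.le
    calc 2 * (a - √a * √m) = 2 * a * (1 - √m / √a) := by field_simp; nlinarith
      _ ≤ _ := h
      _ = _ := by ring

lemma sq_sqrt_sub_sqrt_le_phi_midpoint_gap {a b : ℝ} (ha : 0 ≤ a) (hb : 0 ≤ b) :
    (√a - √b) ^ 2 / 2 ≤ phi a + phi b - 2 * phi ((a + b) / 2) := by
  rcases (add_nonneg ha hb).eq_or_lt with hab | hab
  · obtain ⟨rfl, rfl⟩ : a = 0 ∧ b = 0 := ⟨by linarith, by linarith⟩
    simp [phi]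
  · have hm : 0 < (a + b) / 2 := by positivity
    have hgap : phi a + phi b - 2 * phi ((a + b) / 2) =
        (a * log a - a * log ((a + b) / 2)) + (b * log b - b * log ((a + b) / 2)) := by
      unfold phi; ring
    rw [hgap]
    -- with `m = (a + b) / 2`, the two bounds sum to `2(a + b) - 2√m (√a + √b)`, which exceeds
    -- `(√a - √b)² / 2` by `(2√m - √a - √b)² / 2`
    nlinarith [two_mul_sub_sqrt_mul_sqrt_le ha hm, two_mul_sub_sqrt_mul_sqrt_le hb hm,
      sq_sqrt ha, sq_sqrt hb, sq_sqrt hm.le,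
      sq_nonneg (2 * √((a + b) / 2) - √a - √b)]

section Integral

variable {Ω : Type*} [MeasurableSpace Ω] {μ : Measure Ω}

lemma neg_exp_neg_one_le_integral_phi [IsProbabilityMeasure μ] {Z : Ω → ℝ} (hZ : 0 ≤ᵐ[μ] Z) :
    -exp (-1) ≤ ∫ ω, phi (Z ω) ∂μ := by
  by_cases hint : Integrable (fun ω => phi (Z ω)) μ
  · calc -exp (-1) = ∫ _, -exp (-1) ∂μ := by simp
      _ ≤ _ := integral_mono_ae (integrable_const _) hint
          (hZ.mono fun ω hω => neg_exp_neg_one_le_phi hω)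
  · rw [integral_undef hint]
    simpa using (exp_pos (-1)).le

lemma integrable_phi_midpoint [IsFiniteMeasure μ] {X Y : Ω → ℝ}
    (hX : 0 ≤ᵐ[μ] X) (hY : 0 ≤ᵐ[μ] Y)
    (hXm : AEStronglyMeasurable X μ) (hYm : AEStronglyMeasurable Y μ)
    (hφX : Integrable (fun ω => phi (X ω)) μ) (hφY : Integrable (fun ω => phi (Y ω)) μ) :
    Integrable (fun ω => phi ((X ω + Y ω) / 2)) μ := by
  refine Integrable.mono' (((hφX.add hφY).div_const 2).add (integrable_const (2 * exp (-1))))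
    (continuous_mul_log.comp_aestronglyMeasurable (by fun_prop)) ?_
  filter_upwards [hX, hY] with ω (hXω : 0 ≤ X ω) (hYω : 0 ≤ Y ω)
  have hgap := sq_sqrt_sub_sqrt_le_phi_midpoint_gap hXω hYω
  have hM := neg_exp_neg_one_le_phi (by positivity : 0 ≤ (X ω + Y ω) / 2)
  have := neg_exp_neg_one_le_phi hXω
  have := neg_exp_neg_one_le_phi hYω
  rw [norm_eq_abs, abs_le]
  constructor <;> simp only [Pi.add_apply] <;>
    linarith [exp_pos (-1), sq_nonneg (√(X ω) - √(Y ω))]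

lemma integral_sq_sqrt_sub_sqrt_le [IsFiniteMeasure μ] {X Y : Ω → ℝ}
    (hX : 0 ≤ᵐ[μ] X) (hY : 0 ≤ᵐ[μ] Y)
    (hXm : AEStronglyMeasurable X μ) (hYm : AEStronglyMeasurable Y μ)
    (hφX : Integrable (fun ω => phi (X ω)) μ) (hφY : Integrable (fun ω => phi (Y ω)) μ) :
    ∫ ω, (√(X ω) - √(Y ω)) ^ 2 ∂μ ≤
      2 * (∫ ω, phi (X ω) ∂μ + ∫ ω, phi (Y ω) ∂μ - 2 * ∫ ω, phi ((X ω + Y ω) / 2) ∂μ) := by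
  have hφM := integrable_phi_midpoint hX hY hXm hYm hφX hφY
  have hφXY : Integrable (fun ω => phi (X ω) + phi (Y ω)) μ := hφX.add hφY
  calc ∫ ω, (√(X ω) - √(Y ω)) ^ 2 ∂μ
      ≤ ∫ ω, 2 * (phi (X ω) + phi (Y ω) - 2 * phi ((X ω + Y ω) / 2)) ∂μ := by
        refine integral_mono_of_nonneg (ae_of_all _ fun ω => sq_nonneg _)
          ((hφXY.sub (hφM.const_mul 2)).const_mul 2) ?_
        filter_upwards [hX, hY] with ω (hXω : 0 ≤ X ω) (hYω : 0 ≤ Y ω)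
        linarith [sq_sqrt_sub_sqrt_le_phi_midpoint_gap hXω hYω]
    _ = _ := by
        rw [integral_const_mul, integral_sub hφXY (hφM.const_mul 2),
          integral_add hφX hφY, integral_const_mul]

lemma memLp_two_sqrt {Z : Ω → ℝ} (hZ : Integrable Z μ) (hZ0 : 0 ≤ᵐ[μ] Z) :
    MemLp (fun ω => √(Z ω)) 2 μ := by
  rw [memLp_two_iff_integrable_sq (continuous_sqrt.comp_aestronglyMeasurable hZ.1)]
  exact hZ.congr (hZ0.mono fun ω hω => (sq_sqrt hω).symm)

lemma MeasureTheory.MemLp.sq_dist_toLp_two {f g : Ω → ℝ} (hf : MemLp f 2 μ) (hg : MemLp g 2 μ) :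
    dist (hf.toLp f) (hg.toLp g) ^ 2 = ∫ ω, (f ω - g ω) ^ 2 ∂μ := by
  rw [dist_eq_norm, ← MemLp.toLp_sub, ← real_inner_self_eq_norm_sq, L2.inner_def]
  refine integral_congr_ae ?_
  filter_upwards [(hf.sub hg).coeFn_toLp] with ω hω
  simp [hω, sq]

lemma exists_tendstoInMeasure_of_integral_sq_sub_le {f : ℕ → Ω → ℝ} (hf : ∀ n, MemLp (f n) 2 μ)
    {b : ℕ → ℝ} (hb : Tendsto b atTop (𝓝 0))
    (hfb : ∀ N n m, N ≤ n → N ≤ m → ∫ ω, (f n ω - f m ω) ^ 2 ∂μ ≤ b N) :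
    ∃ g, TendstoInMeasure μ f atTop g := by
  have hcauchy : CauchySeq fun n => (hf n).toLp (f n) := by
    refine cauchySeq_of_le_tendsto_0 (fun N => √(b N)) (fun n m N hn hm => ?_)
      (by simpa using hb.sqrt)
    rw [← sqrt_sq dist_nonneg, (hf n).sq_dist_toLp_two (hf m)]
    exact sqrt_le_sqrt (hfb N n m hn hm)
  obtain ⟨G, hG⟩ := cauchySeq_tendsto_of_complete hcauchy
  exact ⟨G, (tendstoInMeasure_of_tendsto_Lp hG).congr_left fun n => (hf n).coeFn_toLp⟩

lemma integrable_and_integral_le_of_tendsto_ae_of_nonneg {f : ℕ → Ω → ℝ} {g : Ω → ℝ} {L : ℝ}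
    (hf : ∀ n, Integrable (f n) μ) (hf0 : ∀ n, 0 ≤ᵐ[μ] f n)
    (hfg : ∀ᵐ ω ∂μ, Tendsto (fun n => f n ω) atTop (𝓝 (g ω)))
    (hL : Tendsto (fun n => ∫ ω, f n ω ∂μ) atTop (𝓝 L)) :
    Integrable g μ ∧ ∫ ω, g ω ∂μ ≤ L := by
  have hg0 : 0 ≤ᵐ[μ] g := by
    filter_upwards [hfg, ae_all_iff.2 hf0] with ω hω hω0
    exact ge_of_tendsto' hω hω0
  have hlint : ∫⁻ ω, ENNReal.ofReal (g ω) ∂μ ≤ ENNReal.ofReal L := by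
    have hfatou := lintegral_liminf_le' (μ := μ) (u := atTop)
      (f := fun n ω => ENNReal.ofReal (f n ω))
      fun n => ENNReal.measurable_ofReal.comp_aemeasurable (hf n).aemeasurable
    rw [((ENNReal.tendsto_ofReal hL).congr fun n =>
      ofReal_integral_eq_lintegral_ofReal (hf n) (hf0 n)).liminf_eq] at hfatou
    calc ∫⁻ ω, ENNReal.ofReal (g ω) ∂μ = _ := lintegral_congr_ae <| hfg.mono fun ω hω =>
          ((ENNReal.tendsto_ofReal hω).liminf_eq).symm
      _ ≤ _ := hfatou
  have hgm : AEStronglyMeasurable g μ :=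
    aestronglyMeasurable_of_tendsto_ae _ (fun n => (hf n).1) hfg
  have hgi : Integrable g μ :=
    ⟨hgm, (hasFiniteIntegral_iff_ofReal hg0).2 (hlint.trans_lt ENNReal.ofReal_lt_top)⟩
  refine ⟨hgi, ?_⟩
  have hL0 : 0 ≤ L := ge_of_tendsto' hL fun n => integral_nonneg_of_ae (hf0 n)
  rw [← ENNReal.ofReal_le_ofReal_iff hL0, ofReal_integral_eq_lintegral_ofReal hgi hg0]
  exact hlint

lemma integrable_and_integral_le_of_tendsto_ae [IsFiniteMeasure μ] {f : ℕ → Ω → ℝ} {g : Ω → ℝ}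
    {c L : ℝ} (hf : ∀ n, Integrable (f n) μ) (hfc : ∀ n, ∀ᵐ ω ∂μ, c ≤ f n ω)
    (hfg : ∀ᵐ ω ∂μ, Tendsto (fun n => f n ω) atTop (𝓝 (g ω)))
    (hL : Tendsto (fun n => ∫ ω, f n ω ∂μ) atTop (𝓝 L)) :
    Integrable g μ ∧ ∫ ω, g ω ∂μ ≤ L := by
  have hshift := integrable_and_integral_le_of_tendsto_ae_of_nonneg (g := fun ω => g ω - c)
    (f := fun n ω => f n ω - c) (L := L - μ.real Set.univ * c)
    (fun n => (hf n).sub (integrable_const c))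
    (fun n => (hfc n).mono fun ω hω => sub_nonneg.2 hω)
    (hfg.mono fun ω hω => hω.sub_const c)
    (by simpa [integral_sub (hf _) (integrable_const c)] using hL.sub_const _)
  have hgi : Integrable g μ := by simpa [sub_eq_add_neg] using hshift.1
  refine ⟨hgi, ?_⟩
  have := hshift.2
  rw [integral_sub hgi (integrable_const c), integral_const, smul_eq_mul] at this
  linarith

lemma integral_sq_sqrt_sub_sqrt_le_of_convex [IsFiniteMeasure μ] {Zs : Set (Ω → ℝ)}
    (hconv : Convex ℝ Zs) (hdens : ∀ Z ∈ Zs, 0 ≤ᵐ[μ] Z ∧ Integrable Z μ) {J : ℝ}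
    (hJ : ∀ Z ∈ Zs, Integrable (fun ω => phi (Z ω)) μ → J ≤ ∫ ω, phi (Z ω) ∂μ)
    {X Y : Ω → ℝ} (hX : X ∈ Zs) (hY : Y ∈ Zs)
    (hφX : Integrable (fun ω => phi (X ω)) μ) (hφY : Integrable (fun ω => phi (Y ω)) μ) :
    ∫ ω, (√(X ω) - √(Y ω)) ^ 2 ∂μ ≤
      2 * ((∫ ω, phi (X ω) ∂μ - J) + (∫ ω, phi (Y ω) ∂μ - J)) := by
  obtain ⟨hX0, hXi⟩ := hdens X hX
  obtain ⟨hY0, hYi⟩ := hdens Y hY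
  have hM : (fun ω => (X ω + Y ω) / 2) ∈ Zs := by
    convert hconv hX hY (by norm_num : (0 : ℝ) ≤ 2⁻¹) (by norm_num : (0 : ℝ) ≤ 2⁻¹)
      (by norm_num) using 1
    ext ω
    simp only [Pi.add_apply, Pi.smul_apply, smul_eq_mul]
    ring
  have hJM := hJ _ hM (integrable_phi_midpoint hX0 hY0 hXi.1 hYi.1 hφX hφY)
  linarith [integral_sq_sqrt_sub_sqrt_le hX0 hY0 hXi.1 hYi.1 hφX hφY]

lemma exists_tendstoInMeasure_sqrt_of_minimizing [IsFiniteMeasure μ] {Zs : Set (Ω → ℝ)}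
    (hconv : Convex ℝ Zs) (hdens : ∀ Z ∈ Zs, 0 ≤ᵐ[μ] Z ∧ Integrable Z μ) {J : ℝ}
    (hJ : ∀ Z ∈ Zs, Integrable (fun ω => phi (Z ω)) μ → J ≤ ∫ ω, phi (Z ω) ∂μ)
    {Zn : ℕ → Ω → ℝ} (hZn : ∀ n, Zn n ∈ Zs ∧ Integrable (fun ω => phi (Zn n ω)) μ)
    (hanti : Antitone fun n => ∫ ω, phi (Zn n ω) ∂μ)
    (hlim : Tendsto (fun n => ∫ ω, phi (Zn n ω) ∂μ) atTop (𝓝 J)) :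
    ∃ g, TendstoInMeasure μ (fun n ω => √(Zn n ω)) atTop g := by
  refine exists_tendstoInMeasure_of_integral_sq_sub_le
    (fun n => memLp_two_sqrt (hdens _ (hZn n).1).2 (hdens _ (hZn n).1).1)
    (b := fun N => 4 * (∫ ω, phi (Zn N ω) ∂μ - J))
    (by simpa using (tendsto_sub_nhds_zero_iff.2 hlim).const_mul 4) fun N n m hn hm => ?_
  linarith [integral_sq_sqrt_sub_sqrt_le_of_convex hconv hdens hJ (hZn n).1 (hZn m).1
    (hZn n).2 (hZn m).2, hanti hn, hanti hm]

end Integral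

/-- If `𝒵` is a convex set of densities closed in probability (L⁰) and
`inf_{Z ∈ 𝒵} E[Z ln Z] < ∞`, then the infimum is attained. -/
theorem entropy_minimizer_exists
    {Ω : Type*} [MeasurableSpace Ω] (μ : Measure Ω) [IsProbabilityMeasure μ]
    (Zs : Set (Ω → ℝ)) (hconv : Convex ℝ Zs)
    (hdens : ∀ Z ∈ Zs, (∀ᵐ ω ∂μ, 0 ≤ Z ω) ∧ Integrable Z μ ∧ ∫ ω, Z ω ∂μ = 1)
    (hclosed : ∀ (Zn : ℕ → Ω → ℝ) (Z : Ω → ℝ), (∀ n, Zn n ∈ Zs) →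
      MeasureTheory.TendstoInMeasure μ Zn Filter.atTop Z → Z ∈ Zs)
    (hfin : ∃ Z ∈ Zs, Integrable (fun ω => phi (Z ω)) μ) :
    ∃ Zo ∈ Zs, Integrable (fun ω => phi (Zo ω)) μ ∧
      ∀ Z ∈ Zs, Integrable (fun ω => phi (Z ω)) μ →
        ∫ ω, phi (Zo ω) ∂μ ≤ ∫ ω, phi (Z ω) ∂μ := by
  have hdens' : ∀ Z ∈ Zs, 0 ≤ᵐ[μ] Z ∧ Integrable Z μ :=
    fun Z hZ => ⟨(hdens Z hZ).1, (hdens Z hZ).2.1⟩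
  have hbdd : BddBelow ((fun Z : Ω → ℝ => ∫ ω, phi (Z ω) ∂μ) ''
      {Z | Z ∈ Zs ∧ Integrable (fun ω => phi (Z ω)) μ}) := ⟨-exp (-1), by
    rintro _ ⟨Z, ⟨hZ, -⟩, rfl⟩
    exact neg_exp_neg_one_le_integral_phi (hdens' Z hZ).1⟩
  obtain ⟨Zn, hZn, hanti, hlim⟩ := exists_seq_antitone_tendsto_sInf_image hfin hbdd
  have hJ : ∀ Z ∈ Zs, Integrable (fun ω => phi (Z ω)) μ → sInf _ ≤ ∫ ω, phi (Z ω) ∂μ :=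
    fun Z hZ hφZ => csInf_le hbdd ⟨Z, ⟨hZ, hφZ⟩, rfl⟩
  obtain ⟨g, hg⟩ := exists_tendstoInMeasure_sqrt_of_minimizing hconv hdens' hJ hZn hanti hlim
  obtain ⟨ns, hns, hg_ae⟩ := hg.exists_seq_tendsto_ae
  have hZo : ∀ᵐ ω ∂μ, Tendsto (fun k => Zn (ns k) ω) atTop (𝓝 (g ω ^ 2)) := by
    filter_upwards [hg_ae, ae_all_iff.2 fun n => (hdens' _ (hZn n).1).1] with ω hω hω0
    exact (hω.pow 2).congr fun k => sq_sqrt (hω0 (ns k))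
  have hZo_mem : (fun ω => g ω ^ 2) ∈ Zs := hclosed _ _ (fun k => (hZn (ns k)).1)
    (tendstoInMeasure_of_tendsto_ae (fun k => (hdens' _ (hZn (ns k)).1).2.1) hZo)
  obtain ⟨hφZo, hle⟩ := integrable_and_integral_le_of_tendsto_ae (c := -exp (-1))
    (fun k => (hZn (ns k)).2)
    (fun k => (hdens' _ (hZn (ns k)).1).1.mono fun ω => neg_exp_neg_one_le_phi)
    (hZo.mono fun ω hω => (continuous_mul_log.tendsto _).comp hω)
    (hlim.comp hns.tendsto_atTop)
  exact ⟨_, hZo_mem, hφZo, fun Z hZ hφZ => hle.trans (hJ Z hZ hφZ)⟩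
end
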